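/- arXiv:2111.00863 — 4 statements merged into one kernel-verified Lean document; each statement's English description precedes it below -/
import Mathlib

section
/- Any finite word whose exponent is at least 2 (i.e., which can be written as u^s with s ≥ 2 for its shortest period) is closed. -/
open List

variable {α : Type*}

/-- Number of occurrences of `u` as a factor of `w` (by starting position). -/
def occCount [DecidableEq α] (u w : List α) : ℕ :=
  ((Finset.range (w.length + 1)).filter
    (fun i => i + u.length ≤ w.length ∧ (w.drop i).take u.length = u)).card

/-- A finite word is closed if it has length ≤ 1 or it has a border occurring
exactly twice in it (as prefix and as suffix). -/
def ClosedWord [DecidableEq α] (w : List α) : Prop :=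
  w.length ≤ 1 ∨ ∃ k ∈ Finset.Ioo 0 w.length,
    (w.take k) <:+ w ∧ occCount (w.take k) w = 2

instance [DecidableEq α] (w : List α) : Decidable (ClosedWord w) := by
  unfold ClosedWord; infer_instance

/-- The finite set of distinct closed factors of `w`. -/
def closedFactors [DecidableEq α] (w : List α) : Finset (List α) :=
  (w.inits.flatMap List.tails).toFinset.filter ClosedWord

/-- The number of distinct closed factors of `w`. -/
def clCount [DecidableEq α] (w : List α) : ℕ := (closedFactors w).card

/-- `t` is a period of the finite word `w`. -/
def HasPeriod (w : List α) (t : ℕ) : Prop := 0 < t ∧ w.drop t <+: w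

/-- Factor of the infinite word `w` starting at `i` of length `m`. -/
def factorAt (w : ℕ → α) (i m : ℕ) : List α := (List.range m).map (fun j => w (i + j))

/-- `u` occurs in the infinite word `w` at position `i`. -/
def occursAt (w : ℕ → α) (u : List α) (i : ℕ) : Prop := factorAt w i u.length = u

/-- An infinite word is aperiodic if it is not eventually periodic. -/
def Aperiodic' (w : ℕ → α) : Prop := ¬ ∃ p, 0 < p ∧ ∃ N, ∀ n ≥ N, w (n + p) = w n

/-- A finite word is primitive if it is not an integer power of a shorter word. -/
def Primitive (u : List α) : Prop :=
  u ≠ [] ∧ ∀ (v : List α) (k : ℕ), 2 ≤ k → u ≠ (List.replicate k v).flatten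

/-! The border `w.take (|w| - t)`, where `t` is the least period, is the suffix `w.drop t`, so it
occurs at `0` and at `t`. Since `2t ≤ |w|` it has length at least `t`; an occurrence at
`0 < i < t` would then make `i` a period of `w` (the agreement of `w` with its shift by `i` on
the border spreads to all of `w` through the period `t`), contradicting the minimality of `t`. -/

namespace List

theorem take_drop_eq_take_iff {w : List α} {i k : ℕ} :
    (w.drop i).take k = w.take k ↔ ∀ j < k, w[j]? = w[j + i]? := by
  simp only [List.ext_getElem?_iff, getElem?_take, getElem?_drop]
  refine ⟨fun h j hj => ?_, fun h j => ?_⟩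
  · simpa [hj, Nat.add_comm] using (h j).symm
  · split_ifs with hj
    · rw [h j hj, Nat.add_comm]
    · rfl

theorem HasPeriod.of_take_drop_eq_take {w : List α} {t i k : ℕ} (ht : w.HasPeriod t)
    (ht0 : 0 < t) (htk : t ≤ k) (hik : i + k ≤ w.length)
    (hocc : (w.drop i).take k = w.take k) : w.HasPeriod i := by
  rw [hasPeriod_iff_getElem?] at ht ⊢
  rw [take_drop_eq_take_iff] at hocc
  intro j
  induction j using Nat.strong_induction_on with
  | _ j ih =>
    intro hj
    by_cases hjk : j < k
    · exact hocc j hjk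
    · obtain ⟨m, rfl⟩ : ∃ m, j = m + t := ⟨j - t, by omega⟩
      calc w[m + t]? = w[m]? := (ht m (by omega)).symm
        _ = w[m + i]? := ih m (by omega) (by omega)
        _ = w[m + i + t]? := ht _ (by omega)
        _ = w[m + t + i]? := by rw [Nat.add_right_comm]

end List

theorem hasPeriod_iff_pos_and_hasPeriod {w : List α} {t : ℕ} :
    _root_.HasPeriod w t ↔ 0 < t ∧ w.HasPeriod t := by
  rw [_root_.HasPeriod, List.HasPeriod, ← List.prefix_append_right_inj (w.take t),
    List.take_append_drop]

theorem HasPeriod.drop_eq_take {w : List α} {t : ℕ} (ht : _root_.HasPeriod w t) :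
    w.drop t = w.take (w.length - t) := by
  simpa using List.prefix_iff_eq_take.mp ht.2

def occPositions [DecidableEq α] (u w : List α) : Finset ℕ :=
  (Finset.range (w.length + 1)).filter
    (fun i => i + u.length ≤ w.length ∧ (w.drop i).take u.length = u)

theorem occCount_eq_card_occPositions [DecidableEq α] (u w : List α) :
    occCount u w = (occPositions u w).card := rfl

theorem mem_occPositions [DecidableEq α] {u w : List α} {i : ℕ} :
    i ∈ occPositions u w ↔ i + u.length ≤ w.length ∧ (w.drop i).take u.length = u := by
  simp only [occPositions, Finset.mem_filter, Finset.mem_range, and_iff_right_iff_imp]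
  omega

theorem HasPeriod.occPositions_take_length_sub [DecidableEq α] {w : List α} {t : ℕ}
    (ht : _root_.HasPeriod w t) (hmin : ∀ s, _root_.HasPeriod w s → t ≤ s)
    (h2 : 2 * t ≤ w.length) :
    occPositions (w.take (w.length - t)) w = {0, t} := by
  ext i
  simp only [mem_occPositions, Finset.mem_insert, Finset.mem_singleton, List.length_take,
    min_eq_left (Nat.sub_le _ _)]
  constructor
  · rintro ⟨hit, hocc⟩
    by_contra! hi
    have hpi : _root_.HasPeriod w i := hasPeriod_iff_pos_and_hasPeriod.mpr
      ⟨Nat.pos_of_ne_zero hi.1, (hasPeriod_iff_pos_and_hasPeriod.mp ht).2.of_take_drop_eq_take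
        (k := w.length - t) ht.1 (by omega) hit hocc⟩
    have := hmin i hpi
    omega
  · rintro (rfl | rfl)
    · simp
    · refine ⟨by omega, ?_⟩
      rw [← ht.drop_eq_take]
      exact List.take_of_length_le (by simp)

/-- a word whose exponent (w.r.t. its shortest period) is ≥ 2 is closed. -/
theorem stmt1 [DecidableEq α] (w : List α) (t : ℕ)
    (ht : _root_.HasPeriod w t) (hmin : ∀ s, _root_.HasPeriod w s → t ≤ s)
    (h2 : 2 * t ≤ w.length) : ClosedWord w := by
  have ht0 : 0 < t := ht.1
  refine Or.inr ⟨w.length - t, Finset.mem_Ioo.mpr ⟨by omega, by omega⟩, ?_, ?_⟩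
  · rw [← ht.drop_eq_take]
    exact List.drop_suffix t w
  · rw [occCount_eq_card_occPositions, ht.occPositions_take_length_sub hmin h2,
      Finset.card_pair ht0.ne]
end

section
/- Let u and a be a finite nonempty word and a letter, let t be the longest suffix of ua that occurs at least twice in ua, and let z be the longest suffix of t occurring at least twice in t. Then the number of closed factors of ua that end at the last position of ua and do not occur in u is at most |t| − |z|. -/
open List

variable {α : Type*}

/-!
A closed suffix `v` of `ua` that is not a factor of `u` is longer than `t`, because the repeated
suffix `t` already occurs in `u`. Send `v` to the length of a border `b` occurring exactly twice
in `v`. This `b` is a repeated suffix of `ua`, so `|b| ≤ |t|`. If `|b| ≤ |z|`, then `b` would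
also end both occurrences of `z` inside `t`, a proper suffix of `v`, and so occur three times in
`v`; hence `|z| < |b|`. Two such suffixes `v ⊊ v'` cannot share the border length: the common
border would occur in `v'` as its prefix, as the prefix of `v`, and as its suffix.
-/

def OccursAt (b w : List α) (i : ℕ) : Prop :=
  i + b.length ≤ w.length ∧ (w.drop i).take b.length = b

lemma occursAt_zero_of_prefix {b w : List α} (h : b <+: w) : OccursAt b w 0 :=
  ⟨by simpa using h.length_le, by rw [drop_zero, ← prefix_iff_eq_take.mp h]⟩

lemma occursAt_of_suffix {b w : List α} (h : b <:+ w) : OccursAt b w (w.length - b.length) := by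
  have := h.length_le
  exact ⟨by omega, by rw [← suffix_iff_eq_drop.mp h, take_length]⟩

lemma OccursAt.of_suffix {b v w : List α} {i : ℕ} (h : OccursAt b v i) (hv : v <:+ w) :
    OccursAt b w (w.length - v.length + i) := by
  obtain ⟨p, rfl⟩ := hv
  have hp : (p ++ v).length - v.length = p.length := by simp
  have := h.1
  exact ⟨by rw [hp, length_append]; omega, by rw [hp, drop_length_add_append, h.2]⟩

lemma OccursAt.suffix {b z w : List α} {i : ℕ} (h : OccursAt z w i) (hb : b <:+ z) :
    OccursAt b w (i + (z.length - b.length)) := by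
  have := hb.length_le
  refine ⟨by have := h.1; omega, ?_⟩
  have hk : z.length - (z.length - b.length) = b.length := by omega
  calc ((w.drop (i + (z.length - b.length))).take b.length)
      = ((w.drop i).drop (z.length - b.length)).take (z.length - (z.length - b.length)) := by
        rw [hk, drop_drop]
    _ = ((w.drop i).take z.length).drop (z.length - b.length) := drop_take.symm
    _ = b := by rw [h.2, ← suffix_iff_eq_drop.mp hb]

lemma OccursAt.isInfix_take {b w : List α} {i : ℕ} (h : OccursAt b w i) :
    b <:+: w.take (i + b.length) := by
  have hdrop : (w.take (i + b.length)).drop i = b := by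
    rw [drop_take, Nat.add_sub_cancel_left, h.2]
  have := (drop_suffix i (w.take (i + b.length))).isInfix
  rwa [hdrop] at this

section Counting

variable [DecidableEq α]

lemma card_le_occCount {b w : List α} {s : Finset ℕ} (h : ∀ i ∈ s, OccursAt b w i) :
    s.card ≤ occCount b w :=
  Finset.card_le_card fun i hi =>
    Finset.mem_filter.mpr ⟨Finset.mem_range.mpr (by have := (h i hi).1; omega), h i hi⟩

lemma two_le_occCount_iff {b w : List α} :
    2 ≤ occCount b w ↔ ∃ i j, i ≠ j ∧ OccursAt b w i ∧ OccursAt b w j := by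
  constructor
  · intro h
    obtain ⟨i, hi, j, hj, hij⟩ := Finset.one_lt_card.mp h
    exact ⟨i, j, hij, (Finset.mem_filter.mp hi).2, (Finset.mem_filter.mp hj).2⟩
  · rintro ⟨i, j, hij, hi, hj⟩
    calc 2 = ({i, j} : Finset ℕ).card := (Finset.card_pair hij).symm
      _ ≤ occCount b w := card_le_occCount (by simp [hi, hj])

lemma three_le_occCount {b w : List α} {i j k : ℕ} (hij : i ≠ j) (hik : i ≠ k) (hjk : j ≠ k)
    (hi : OccursAt b w i) (hj : OccursAt b w j) (hk : OccursAt b w k) : 3 ≤ occCount b w :=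
  calc 3 = ({i, j, k} : Finset ℕ).card :=
        (Finset.card_eq_three.mpr ⟨i, j, k, hij, hik, hjk, rfl⟩).symm
    _ ≤ occCount b w := card_le_occCount (by simp [hi, hj, hk])

lemma exists_occursAt_ne_of_two_le_occCount {b w : List α} (h : 2 ≤ occCount b w) (k : ℕ) :
    ∃ i, i ≠ k ∧ OccursAt b w i := by
  obtain ⟨i, j, hij, hi, hj⟩ := two_le_occCount_iff.mp h
  by_cases hik : i = k
  · exact ⟨j, by omega, hj⟩
  · exact ⟨i, hik, hi⟩

lemma length_lt_of_two_le_occCount {b w : List α} (h : 2 ≤ occCount b w) :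
    b.length < w.length := by
  obtain ⟨i, hi, hocc⟩ := exists_occursAt_ne_of_two_le_occCount h 0
  have := hocc.1
  omega

lemma occCount_le_of_suffix {b v w : List α} (h : v <:+ w) : occCount b v ≤ occCount b w := by
  refine Finset.card_le_card_of_injOn (w.length - v.length + ·) (fun i hi => ?_)
    (fun i _ j _ hij => by simpa using hij)
  have hocc : OccursAt b v i := (Finset.mem_filter.mp hi).2
  have := (hocc.of_suffix h).1
  dsimp only
  exact Finset.mem_filter.mpr ⟨Finset.mem_range.mpr (by omega), hocc.of_suffix h⟩

lemma isInfix_dropLast_of_two_le_occCount {s w : List α} (hs : s <:+ w)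
    (h : 2 ≤ occCount s w) : s <:+: w.dropLast := by
  obtain ⟨i, hi, hocc⟩ := exists_occursAt_ne_of_two_le_occCount h (w.length - s.length)
  have hlt : i + s.length ≤ w.length - 1 := by have := hocc.1; have := hs.length_le; omega
  have hpre : w.take (i + s.length) <+: w.dropLast := by
    rw [dropLast_eq_take]
    exact take_prefix_take_left hlt
  exact hocc.isInfix_take.trans hpre.isInfix

lemma three_le_occCount_of_prefix_of_repeated_in_tail {b z v : List α} (hbv : b <+: v)
    (hbz : b <:+ z) (hz : 2 ≤ occCount z v.tail) : 3 ≤ occCount b v := by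
  obtain ⟨i, j, hij, hi, hj⟩ := two_le_occCount_iff.mp hz
  cases v with
  | nil =>
    have := hi.1
    have := hj.1
    simp only [tail_nil, length_nil] at *
    omega
  | cons x v =>
    have hi' := (hi.of_suffix (tail_suffix _)).suffix hbz
    have hj' := (hj.of_suffix (tail_suffix _)).suffix hbz
    simp only [length_cons, tail_cons, Nat.add_sub_cancel_left] at hi' hj'
    exact three_le_occCount (by omega) (by omega) (by omega) (occursAt_zero_of_prefix hbv) hi' hj'

lemma three_le_occCount_of_border_of_suffix {b v v' : List α} (hbv : b <+: v) (hbs : b <:+ v)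
    (hbv' : b <+: v') (hvv' : v <:+ v') (hb : b.length < v.length)
    (hv : v.length < v'.length) : 3 ≤ occCount b v' := by
  have hmid := (occursAt_zero_of_prefix hbv).of_suffix hvv'
  exact three_le_occCount (by omega) (by omega) (by omega) (occursAt_zero_of_prefix hbv') hmid
    (occursAt_of_suffix (hbs.trans hvv'))

structure IsClosingBorder (b v : List α) : Prop where
  isPrefix : b <+: v
  isSuffix : b <:+ v
  length_lt : b.length < v.length
  occCount_eq_two : occCount b v = 2

lemma ClosedWord.exists_isClosingBorder {v : List α} (h : ClosedWord v) (hv : 2 ≤ v.length) :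
    ∃ b, IsClosingBorder b v := by
  rcases h with h | ⟨k, hk, hks, hk2⟩
  · omega
  · rw [Finset.mem_Ioo] at hk
    exact ⟨v.take k, take_prefix k v, hks, by simp; omega, hk2⟩

lemma IsClosingBorder.length_gt {b v t z : List α} (hb : IsClosingBorder b v) (ht : t <:+ v)
    (htv : t.length < v.length) (hz : z <:+ t) (hz2 : 2 ≤ occCount z t) :
    z.length < b.length := by
  by_contra! hle
  have hbz : b <:+ z := suffix_of_suffix_length_le hb.isSuffix (hz.trans ht) hle
  have htail : t <:+ v.tail := suffix_of_suffix_length_le ht (tail_suffix v) (by simp; omega)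
  have := three_le_occCount_of_prefix_of_repeated_in_tail hb.isPrefix hbz
    (hz2.trans (occCount_le_of_suffix htail))
  have := hb.occCount_eq_two
  omega

lemma IsClosingBorder.eq_of_length_eq {b b' v v' w : List α} (hb : IsClosingBorder b v)
    (hb' : IsClosingBorder b' v') (hv : v <:+ w) (hv' : v' <:+ w) (hl : b.length = b'.length) :
    v = v' := by
  wlog hle : v.length ≤ v'.length generalizing b b' v v'
  · exact (this hb' hb hv' hv hl.symm (by omega)).symm
  rcases hle.lt_or_eq with hlt | heq
  · have hbb' : b = b' := (suffix_of_suffix_length_le (hb.isSuffix.trans hv)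
      (hb'.isSuffix.trans hv') hl.le).eq_of_length hl
    subst hbb'
    have := three_le_occCount_of_border_of_suffix hb.isPrefix hb.isSuffix hb'.isPrefix
      (suffix_of_suffix_length_le hv hv' hle) hb.length_lt hlt
    have := hb'.occCount_eq_two
    omega
  · exact (suffix_of_suffix_length_le hv hv' hle).eq_of_length heq

end Counting

theorem stmt4_general [DecidableEq α] (u t z : List α) (a : α)
    (ht : t <:+ u ++ [a]) (ht2 : 2 ≤ occCount t (u ++ [a]))
    (htmax : ∀ s : List α, s <:+ u ++ [a] → 2 ≤ occCount s (u ++ [a]) → s.length ≤ t.length)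
    (hz : z <:+ t) (hz2 : 2 ≤ occCount z t) :
    (((u ++ [a]).tails.toFinset.filter
        (fun v => ClosedWord v ∧ ¬ v <:+: u)).card ≤ t.length - z.length) := by
  set S := (u ++ [a]).tails.toFinset.filter (fun v => ClosedWord v ∧ ¬ v <:+: u) with hS
  have hmem : ∀ v ∈ S, v <:+ u ++ [a] ∧ ClosedWord v ∧ ¬ v <:+: u := fun v hv => by
    simpa only [hS, Finset.mem_filter, mem_toFinset, mem_tails] using hv
  have htu : t <:+: u := by simpa using isInfix_dropLast_of_two_le_occCount ht ht2
  have hlong : ∀ v ∈ S, t.length < v.length := fun v hv => by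
    by_contra! hle
    exact (hmem v hv).2.2 ((suffix_of_suffix_length_le (hmem v hv).1 ht hle).isInfix.trans htu)
  have hv2 : ∀ v ∈ S, 2 ≤ v.length := fun v hv => by
    have := hlong v hv
    have := length_lt_of_two_le_occCount hz2
    omega
  choose! g hg using fun v hv => (hmem v hv).2.1.exists_isClosingBorder (hv2 v hv)
  have hrange : ∀ v ∈ S, (g v).length ∈ Finset.Ioc z.length t.length := fun v hv => by
    have hvw := (hmem v hv).1
    have htv : t <:+ v := suffix_of_suffix_length_le ht hvw (hlong v hv).le
    have hrep : 2 ≤ occCount (g v) (u ++ [a]) :=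
      (hg v hv).occCount_eq_two.ge.trans (occCount_le_of_suffix hvw)
    exact Finset.mem_Ioc.mpr ⟨(hg v hv).length_gt htv (hlong v hv) hz hz2,
      htmax _ ((hg v hv).isSuffix.trans hvw) hrep⟩
  have hinj : Set.InjOn (fun v => (g v).length) S := fun v hv v' hv' hl =>
    (hg v hv).eq_of_length_eq (hg v' hv') (hmem v hv).1 (hmem v' hv').1 hl
  calc S.card ≤ (Finset.Ioc z.length t.length).card := Finset.card_le_card_of_injOn _ hrange hinj
    _ = t.length - z.length := Nat.card_Ioc _ _

/-- with `t` the longest repeated suffix of `u ++ [a]` and `z` the longest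
repeated suffix of `t`, the number of closed factors of `u ++ [a]` ending at its last
position and not occurring in `u` is at most `|t| - |z|`. -/
theorem stmt4 [DecidableEq α] (u t z : List α) (a : α) (hu : u ≠ [])
    (ht : t <:+ u ++ [a]) (ht2 : 2 ≤ occCount t (u ++ [a]))
    (htmax : ∀ s : List α, s <:+ u ++ [a] → 2 ≤ occCount s (u ++ [a]) → s.length ≤ t.length)
    (hz : z <:+ t) (hz2 : 2 ≤ occCount z t)
    (hzmax : ∀ s : List α, s <:+ t → 2 ≤ occCount s t → s.length ≤ z.length) :
    (((u ++ [a]).tails.toFinset.filter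
        (fun v => ClosedWord v ∧ ¬ v <:+: u)).card ≤ t.length - z.length) :=
  stmt4_general u t z a ht ht2 htmax hz hz2
end

section
/- Let w = v^α be a finite word of exponent α ≥ 3 with primitive root v. Then for any cyclic shift v' of v, the word v'^α contains exactly the same number of distinct closed factors as w. -/
open List

variable {α : Type*}

/-- The fractional power of `v` of total length `n` (prefix of length `n` of `v^ω`). -/
def fracPow (v : List α) (n : ℕ) : List α := ((List.replicate n v).flatten).take n

/-!
Let `p = |v|` and let `W = v^ω`, so that `v^α` is the window of length `n` of `W` starting at `0`
and `(yx)^α` the one starting at `|x|`. By primitivity every period of `W` is a multiple of `p`,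
hence a factor of length at least `p` determines its starting position modulo `p`. Consequently a
factor of length `m ≥ 2p` is closed: its border of length `m - p` occurs only at offsets `0` and
`p`. Split the closed factors of a window of length `n ≥ 3p` at length `n - p`. The short ones are
exactly the closed factors of `W` of length at most `n - p`, since a factor `u` of `W` occurs in
every window of length `|u| + p`. The long ones start before position `p` and are all closed, so
they are in bijection with the pairs `(i, m)` with `i + m ≤ n < m + p`. Neither part depends on
the window.
-/

open Function

namespace Function.Periodic

variable {β : Type*} {f g : ℕ → β} {a b p : ℕ}

theorem nat_sub (ha : Periodic f a) (hb : Periodic f b) : Periodic f (a - b) := by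
  intro x
  rcases le_total b a with hba | hab
  · rw [← hb (x + (a - b)), add_assoc, Nat.sub_add_cancel hba, ha]
  · rw [Nat.sub_eq_zero_of_le hab, add_zero]

theorem nat_gcd (ha : Periodic f a) (hb : Periodic f b) : Periodic f (a.gcd b) := by
  induction a, b using Nat.gcd.induction with
  | H0 n => simpa using hb
  | H1 m n _ ih =>
    rw [Nat.gcd_rec]
    refine ih ?_ ha
    rw [Nat.mod_eq_sub_mul_div, mul_comm]
    exact hb.nat_sub (ha.nat_mul _)

theorem eq_of_forall_Ico (hp0 : 0 < p) (hf : Periodic f p) (hg : Periodic g p) {i : ℕ}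
    (h : ∀ k, i ≤ k → k < i + p → f k = g k) : f = g := by
  funext x
  -- shift `x` by a multiple of `p` into `[i, i + p)`
  set y := x + i * p
  have hiy : i ≤ y := by have := Nat.le_mul_of_pos_right i hp0; omega
  have hy : y = i + (y - i) % p + (y - i) / p * p := by have := Nat.mod_add_div' (y - i) p; omega
  have hk : i + (y - i) % p < i + p := by have := Nat.mod_lt (y - i) hp0; omega
  calc f x = f y := (hf.nat_mul i x).symm
    _ = g y := by
      rw [hy]
      exact ((hf.nat_mul _ _).trans (h _ (by omega) hk)).trans (hg.nat_mul _ _).symm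
    _ = g x := hg.nat_mul i x

end Function.Periodic

section factorAt

variable (W : ℕ → α)

@[simp] theorem length_factorAt (i m : ℕ) : (factorAt W i m).length = m := by
  simp [factorAt]

@[simp] theorem getElem_factorAt {i m k : ℕ} (h : k < (factorAt W i m).length) :
    (factorAt W i m)[k] = W (i + k) := by
  simp [factorAt]

theorem factorAt_add (i a b : ℕ) :
    factorAt W i (a + b) = factorAt W i a ++ factorAt W (i + a) b := by
  simp [factorAt, List.range_add, add_assoc]

theorem take_factorAt {i m k : ℕ} (h : k ≤ m) : (factorAt W i m).take k = factorAt W i k := by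
  rw [← Nat.add_sub_cancel' h, factorAt_add, List.take_left' (length_factorAt W i k)]

theorem drop_factorAt {i m k : ℕ} (h : k ≤ m) :
    (factorAt W i m).drop k = factorAt W (i + k) (m - k) := by
  conv_lhs => rw [← Nat.add_sub_cancel' h, factorAt_add]
  exact List.drop_left' (length_factorAt W i k)

theorem infix_factorAt_iff {u : List α} {s n : ℕ} :
    u <:+: factorAt W s n ↔ ∃ i, i + u.length ≤ n ∧ factorAt W (s + i) u.length = u := by
  constructor
  · rintro ⟨a, b, h⟩
    have hlen : a.length + u.length ≤ n := by
      have := congrArg List.length h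
      simp only [List.length_append, length_factorAt] at this
      omega
    refine ⟨a.length, hlen, ?_⟩
    rw [← take_factorAt W (Nat.le_sub_of_add_le' hlen), ← drop_factorAt W (by omega), ← h,
      List.append_assoc, List.drop_left, List.take_left]
  · rintro ⟨i, hi, hu⟩
    rw [← hu, ← take_factorAt W (Nat.le_sub_of_add_le' hi), ← drop_factorAt W (by omega)]
    exact (List.take_prefix _ _).isInfix.trans (List.drop_suffix _ _).isInfix

end factorAt

theorem Function.Periodic.factorAt {W : ℕ → α} {p : ℕ} (hW : Periodic W p) (m : ℕ) :
    Periodic (fun i => factorAt W i m) p := by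
  intro i
  apply List.ext_getElem (by simp)
  intro k _ _
  simp only [getElem_factorAt, add_right_comm i p k]
  exact hW _

theorem mem_closedFactors [DecidableEq α] {u w : List α} :
    u ∈ closedFactors w ↔ u <:+: w ∧ ClosedWord u := by
  rw [closedFactors, Finset.mem_filter, and_congr_left_iff]
  intro _
  rw [List.mem_toFinset, List.mem_flatMap]
  constructor
  · rintro ⟨t, ht, hu⟩
    exact ((List.mem_tails _ _).1 hu).isInfix.trans ((List.mem_inits _ _).1 ht).isInfix
  · rintro ⟨a, b, h⟩
    exact ⟨a ++ u, (List.mem_inits _ _).2 ⟨b, h⟩, (List.mem_tails _ _).2 ⟨a, rfl⟩⟩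

section PeriodicWord

variable {W : ℕ → α} {p : ℕ}

theorem periodic_sub_of_factorAt_eq (hp0 : 0 < p) (hW : Periodic W p) {i j m : ℕ}
    (hm : p ≤ m) (hij : i ≤ j) (h : factorAt W i m = factorAt W j m) : Periodic W (j - i) := by
  have hext := (hW.add_const (j - i)).eq_of_forall_Ico hp0 hW (i := i) fun k hik hk => by
    have := List.getElem_of_eq h (i := k - i) (by simp; omega)
    simp only [getElem_factorAt] at this
    rw [show k + (j - i) = j + (k - i) by omega, ← this, Nat.add_sub_cancel' hik]
  exact fun x => congrFun hext x

theorem modEq_of_factorAt_eq (hp0 : 0 < p) (hW : Periodic W p)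
    (hmin : ∀ d, Periodic W d → p ∣ d) {i j m : ℕ} (hm : p ≤ m)
    (h : factorAt W i m = factorAt W j m) : i ≡ j [MOD p] := by
  wlog hij : i ≤ j generalizing i j
  · exact (this h.symm (by omega)).symm
  exact (Nat.modEq_iff_dvd' hij).2 (hmin _ (periodic_sub_of_factorAt_eq hp0 hW hm hij h))

theorem closedWord_factorAt [DecidableEq α] (hp0 : 0 < p) (hW : Periodic W p)
    (hmin : ∀ d, Periodic W d → p ∣ d) (i : ℕ) {m : ℕ} (hm : 2 * p ≤ m) :
    ClosedWord (factorAt W i m) := by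
  -- the border of length `m - p` occurs only at positions `0` and `p`
  have hborder : factorAt W (i + p) (m - p) = factorAt W i (m - p) := hW.factorAt (m - p) i
  right
  refine ⟨m - p, by simp; omega, ?_, ?_⟩
  · rw [take_factorAt W (by omega), ← hborder, ← drop_factorAt W (by omega)]
    exact List.drop_suffix _ _
  rw [take_factorAt W (by omega), occCount, Finset.card_eq_two]
  refine ⟨0, p, hp0.ne, ?_⟩
  ext j
  simp only [Finset.mem_filter, Finset.mem_range, length_factorAt, Finset.mem_insert,
    Finset.mem_singleton]
  constructor
  · rintro ⟨-, hj, hocc⟩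
    rw [drop_factorAt W (by omega), take_factorAt W (by omega)] at hocc
    have hjp : j ≡ 0 [MOD p] :=
      Nat.ModEq.add_left_cancel' i (modEq_of_factorAt_eq hp0 hW hmin (by omega) hocc)
    obtain ⟨c, rfl⟩ := (Nat.modEq_zero_iff_dvd.1 hjp)
    rcases Nat.eq_zero_or_pos c with rfl | hc
    · exact Or.inl (mul_zero p)
    · exact Or.inr (le_antisymm (by omega) (Nat.le_mul_of_pos_right p hc))
  · rintro (rfl | rfl)
    · exact ⟨by omega, by omega, by rw [List.drop_zero, take_factorAt W (by omega)]⟩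
    · exact ⟨by omega, by omega,
        by rw [drop_factorAt W (by omega), take_factorAt W le_rfl, hborder]⟩

theorem infix_factorAt_iff_of_periodic (hp0 : 0 < p) (hW : Periodic W p) {u : List α}
    {s n : ℕ} (hu : u.length + p ≤ n) :
    u <:+: factorAt W s n ↔ ∃ i, factorAt W i u.length = u := by
  rw [infix_factorAt_iff]
  constructor
  · rintro ⟨i, -, h⟩
    exact ⟨s + i, h⟩
  · rintro ⟨i, h⟩
    -- start at `s + j` with `j < p` and `s + j ≡ i [MOD p]`
    have hj : s + (i + (p - 1) * s) = i + s * p := by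
      rw [Nat.sub_one_mul, mul_comm p s]
      have := Nat.le_mul_of_pos_right s hp0
      omega
    refine ⟨(i + (p - 1) * s) % p, by have := Nat.mod_lt (i + (p - 1) * s) hp0; omega, ?_⟩
    have hmod := ((hW.factorAt u.length).const_add s).map_mod_nat (i + (p - 1) * s)
    rw [hmod, hj]
    exact ((hW.factorAt u.length).nat_mul s i).trans h

theorem card_filter_closedFactors_long [DecidableEq α] (hp0 : 0 < p) (hW : Periodic W p)
    (hmin : ∀ d, Periodic W d → p ∣ d) (s : ℕ) {n : ℕ} (hn : 3 * p ≤ n) :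
    ((closedFactors (factorAt W s n)).filter fun u => ¬ u.length + p ≤ n).card =
      ((Finset.range (n + 1) ×ˢ Finset.range (n + 1)).filter
        fun q : ℕ × ℕ => q.1 + q.2 ≤ n ∧ n < q.2 + p).card := by
  symm
  refine Finset.card_bij (fun q _ => factorAt W (s + q.1) q.2) ?_ ?_ ?_
  · rintro ⟨i, m⟩ hq
    simp only [Finset.mem_filter, Finset.mem_product, Finset.mem_range] at hq
    simp only [Finset.mem_filter, mem_closedFactors, length_factorAt, infix_factorAt_iff]
    exact ⟨⟨⟨i, hq.2.1, rfl⟩, closedWord_factorAt hp0 hW hmin _ (by omega)⟩, by omega⟩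
  · rintro ⟨i, m⟩ hq ⟨i', m'⟩ hq' h
    simp only [Finset.mem_filter, Finset.mem_product, Finset.mem_range] at hq hq'
    obtain rfl : m = m' := by simpa using congrArg List.length h
    -- both starting positions lie in `[s, s + p)`
    have hmod := Nat.ModEq.add_left_cancel' s (modEq_of_factorAt_eq hp0 hW hmin (by omega) h)
    rw [Nat.ModEq, Nat.mod_eq_of_lt (by omega), Nat.mod_eq_of_lt (by omega)] at hmod
    exact Prod.ext hmod rfl
  · intro u hu
    simp only [Finset.mem_filter, mem_closedFactors, infix_factorAt_iff] at hu
    obtain ⟨⟨⟨i, hi, hfac⟩, -⟩, hlong⟩ := hu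
    exact ⟨(i, u.length), by simp only [Finset.mem_filter, Finset.mem_product, Finset.mem_range]; omega, hfac⟩

theorem clCount_factorAt_eq [DecidableEq α] (hp0 : 0 < p) (hW : Periodic W p)
    (hmin : ∀ d, Periodic W d → p ∣ d) (s t : ℕ) {n : ℕ} (hn : 3 * p ≤ n) :
    clCount (factorAt W s n) = clCount (factorAt W t n) := by
  have hshort : (closedFactors (factorAt W s n)).filter (fun u => u.length + p ≤ n) =
      (closedFactors (factorAt W t n)).filter (fun u => u.length + p ≤ n) := by
    ext u
    simp only [Finset.mem_filter, mem_closedFactors]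
    refine and_congr_left fun hu => and_congr_left fun _ => ?_
    rw [infix_factorAt_iff_of_periodic hp0 hW hu, infix_factorAt_iff_of_periodic hp0 hW hu]
  rw [clCount, clCount, ← Finset.card_filter_add_card_filter_not (fun u => u.length + p ≤ n),
    ← Finset.card_filter_add_card_filter_not (s := closedFactors (factorAt W t n))
      (fun u => u.length + p ≤ n), hshort, card_filter_closedFactors_long hp0 hW hmin s hn,
    card_filter_closedFactors_long hp0 hW hmin t hn]

end PeriodicWord

section Powers

variable {W : ℕ → α} {s : ℕ}

theorem flatten_replicate_eq_factorAt {u : List α} (hW : Periodic W u.length)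
    (hu : factorAt W s u.length = u) (k : ℕ) :
    (List.replicate k u).flatten = factorAt W s (k * u.length) := by
  induction k with
  | zero => simp [factorAt]
  | succ k ih =>
    have hk : factorAt W (s + k * u.length) u.length = u :=
      ((hW.factorAt u.length).nat_mul k s).trans hu
    rw [List.replicate_succ', List.flatten_append, ih, Nat.succ_mul, factorAt_add, hk,
      List.flatten_singleton]

theorem fracPow_eq_factorAt {v : List α} (hv : v ≠ []) (hW : Periodic W v.length)
    (h : factorAt W s v.length = v) (n : ℕ) : fracPow v n = factorAt W s n := by
  rw [fracPow, flatten_replicate_eq_factorAt hW h,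
    take_factorAt W (Nat.le_mul_of_pos_right n (List.length_pos_iff.2 hv))]

theorem factorAt_add_length_eq_append {x y : List α} (hW : Periodic W (x ++ y).length)
    (h : factorAt W s (x ++ y).length = x ++ y) :
    factorAt W (s + x.length) (y ++ x).length = y ++ x := by
  have hsq : factorAt W s (2 * (x ++ y).length) = x ++ y ++ (x ++ y) := by
    rw [← flatten_replicate_eq_factorAt hW h]
    simp
  have hlen : (y ++ x).length ≤ 2 * (x ++ y).length - x.length := by simp; omega
  rw [← take_factorAt W hlen, ← drop_factorAt W (by simp; omega), hsq]
  simp [List.take_append]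

theorem dvd_of_periodic_of_primitive {v : List α} (hv : Primitive v) (hW : Periodic W v.length)
    (h : factorAt W s v.length = v) {d : ℕ} (hd : Periodic W d) : v.length ∣ d := by
  set g := v.length.gcd d
  have hgv : g ∣ v.length := Nat.gcd_dvd_left _ _
  have hg0 : 0 < g := Nat.gcd_pos_of_pos_left _ (List.length_pos_iff.2 hv.1)
  suffices g = v.length from this ▸ Nat.gcd_dvd_right _ _
  by_contra hne
  have hk : 2 ≤ v.length / g := by
    obtain ⟨k, hk⟩ := hgv
    rw [hk, Nat.mul_div_cancel_left _ hg0]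
    rcases k with _ | _ | k
    · exact absurd hk (by simpa using hv.1)
    · exact absurd hk (by simpa using Ne.symm hne)
    · omega
  -- otherwise `v` is the `(v.length / g)`-th power of its prefix of length `g`
  refine hv.2 (factorAt W s g) (v.length / g) hk ?_
  rw [flatten_replicate_eq_factorAt (by simpa using hW.nat_gcd hd) (by rw [length_factorAt]), length_factorAt,
    Nat.div_mul_cancel hgv, h]

theorem exists_periodic_factorAt_eq {v : List α} (hv : v ≠ []) :
    ∃ W : ℕ → α, Periodic W v.length ∧ factorAt W 0 v.length = v :=
  ⟨fun j => v[j % v.length]'(Nat.mod_lt _ (List.length_pos_iff.2 hv)),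
    fun j => by simp,
    List.ext_getElem (by simp) fun k hk _ => by simp [Nat.mod_eq_of_lt (by simpa using hk)]⟩

end Powers

/-- if `w = v^α` with `v` primitive and exponent α ≥ 3, then for any
cyclic shift `v' = y ++ x` of `v = x ++ y`, the word `v'^α` has exactly the same
number of distinct closed factors as `w`. -/
theorem stmt7 [DecidableEq α] (v x y : List α) (hv : v = x ++ y) (hp : Primitive v)
    (n : ℕ) (h : 3 * v.length ≤ n) :
    clCount (fracPow (y ++ x) n) = clCount (fracPow v n) := by
  obtain ⟨W, hW, hWv⟩ := exists_periodic_factorAt_eq hp.1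
  have hmin : ∀ d, Periodic W d → v.length ∣ d := fun d => dvd_of_periodic_of_primitive hp hW hWv
  subst hv
  have hyx : y ++ x ≠ [] := by simpa [and_comm] using hp.1
  have hWyx : Periodic W (y ++ x).length := by simpa [add_comm] using hW
  rw [fracPow_eq_factorAt hp.1 hW hWv,
    fracPow_eq_factorAt hyx hWyx (factorAt_add_length_eq_append hW hWv)]
  exact clCount_factorAt_eq (List.length_pos_iff.2 hp.1) hW hmin _ _ h
end

section
/- Let n be divisible by 3 and suppose there exists a word v of length n/3 over a finite alphabet all of whose factors of length ⌈log_{|A|}(n/3)⌉ are distinct (a de Bruijn-type word). Then the cube w = v³, of length n, contains at least n²/6 − (2n/3)·⌈log(n/3)⌉ + n/6 distinct closed factors. -/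
open List

variable {α : Type*}

/-!
Write `p = |v|`, `w = v³` and `t = p + 1 - L`, the number of positions `i` with `i + L ≤ p`.
Two factors of `w` of length at least `L` starting at two distinct such positions differ, as
their prefixes of length `L` are distinct factors of `v`.

Every factor of `w` of length `> 2p` has period `p`, less than half its length, and is therefore
closed: if `q` is its least period, the border of length `|u| - q` occurs only at `0` and `q`,
since another occurrence would be a smaller period. Starting them at `i < t` gives
`∑_{i<t} (p - i)` distinct closed factors.

For `i < t` and `L ≤ m ≤ p` the factor `u` of length `m` at `i` reoccurs at `i + p`, and `w` cut
from the occurrence at `i` to the end of the next occurrence of `u` is a closed factor of length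
`≤ 2p` with border `u` occurring exactly twice. A word has no two such borders of different
lengths (the shorter one would occur three times), so this gives `t²` further closed factors.
The bound follows from `2 ∑_{i<t} (p - i) + t² = t (2p + 1)`.
-/

namespace List

theorem IsPrefix.getElem?_eq {l₁ l₂ : List α} (h : l₁ <+: l₂) {k : ℕ}
    (hk : k < l₁.length) : l₁[k]? = l₂[k]? := by
  rw [prefix_iff_getElem?.mp h k hk, getElem?_eq_getElem hk]

theorem hasPeriod_cube (v : List α) : HasPeriod (v ++ v ++ v) v.length := by
  rw [HasPeriod, append_assoc, take_left]
  simp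

theorem HasPeriod.take_drop {w : List α} {P : ℕ} (h : HasPeriod w P) (i m : ℕ) :
    HasPeriod ((w.drop i).take m) P :=
  h.infix ((take_prefix _ _).isInfix.trans (drop_suffix _ _).isInfix)

theorem HasPeriod.of_drop_prefix_drop {u : List α} {q i : ℕ} (hq : HasPeriod u q)
    (h2q : 2 * q ≤ u.length) (hiq : i < q) (hocc : u.drop q <+: u.drop i) :
    HasPeriod u i := by
  have hper := hasPeriod_iff_getElem?.mp hq
  have hshift : ∀ k, k + q < u.length → u[k]? = u[k + i]? := fun k hk => by
    have := hocc.getElem?_eq (k := k) (by rw [length_drop]; omega)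
    rw [getElem?_drop, getElem?_drop, add_comm q, ← hper k (by omega)] at this
    rw [this, add_comm]
  refine hasPeriod_iff_getElem?.mpr fun k hk => ?_
  by_cases hkq : k + q < u.length
  · exact hshift k hkq
  · -- go back one period, where the border occurrence at `i` applies
    obtain ⟨j, rfl⟩ : ∃ j, k = j + q := ⟨k - q, by omega⟩
    rw [show j + q + i = j + i + q by omega, ← hper (j + i) (by omega), ← hshift j (by omega),
      hper j (by omega)]

end List

def DistinctFactors (v : List α) (L : ℕ) : Prop :=
  ∀ i j, i + L ≤ v.length → j + L ≤ v.length → (v.drop i).take L = (v.drop j).take L → i = j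

theorem DistinctFactors.eq_of_take_drop_eq {v w : List α} {L : ℕ} (hv : DistinctFactors v L)
    (hvw : v <+: w) {i j m : ℕ} (hi : i + L ≤ v.length) (hj : j + L ≤ v.length) (hm : L ≤ m)
    (h : (w.drop i).take m = (w.drop j).take m) : i = j := by
  have hfac : ∀ k, k + L ≤ v.length → (v.drop k).take L = ((w.drop k).take m).take L :=
    fun k hk => by
      have := hvw.length_le
      rw [take_take, min_eq_left hm]
      exact ((hvw.drop k).take L).eq_of_length (by simp only [length_take, length_drop]; omega)
  exact hv i j hi hj (by rw [hfac i hi, hfac j hj, h])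

section Closed

variable [DecidableEq α]

theorem occCount_eq_card_filter (u w : List α) :
    occCount u w = ((Finset.range (w.length + 1)).filter (fun i => u <+: w.drop i)).card := by
  unfold occCount
  congr 1
  refine Finset.filter_congr fun i hi => ?_
  have hi := Finset.mem_range.mp hi
  rw [prefix_iff_eq_take, eq_comm]
  constructor
  · exact fun h => h.2
  · intro h
    have := congrArg List.length h
    simp only [length_take, length_drop] at this
    exact ⟨by omega, h⟩

theorem take_drop_mem_closedFactors {w : List α} {i m : ℕ}
    (h : ClosedWord ((w.drop i).take m)) : (w.drop i).take m ∈ closedFactors w := by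
  refine Finset.mem_filter.mpr ⟨List.mem_toFinset.mpr (List.mem_flatMap.mpr ?_), h⟩
  refine ⟨w.take (i + m), (List.mem_inits _ _).mpr (take_prefix _ _), ?_⟩
  have : (w.drop i).take m = (w.take (i + m)).drop i := by
    rw [drop_take, Nat.add_sub_cancel_left]
  rw [List.mem_tails, this]
  exact drop_suffix _ _

theorem occCount_eq_two_of_border {u z : List α} (hpre : u <+: z) (hsuf : u <:+ z)
    (hlt : u.length < z.length)
    (hgap : ∀ i, 0 < i → i < z.length - u.length → ¬ u <+: z.drop i) :
    occCount u z = 2 := by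
  have hend : z.drop (z.length - u.length) = u := (suffix_iff_eq_drop.mp hsuf).symm
  have : (Finset.range (z.length + 1)).filter (fun i => u <+: z.drop i) =
      {0, z.length - u.length} := by
    ext i
    simp only [Finset.mem_filter, Finset.mem_range, Finset.mem_insert, Finset.mem_singleton]
    constructor
    · rintro ⟨hiz, hi⟩
      have : u.length ≤ z.length - i := by simpa using hi.length_le
      by_contra hne
      exact hgap i (by omega) (by omega) hi
    · rintro (rfl | rfl)
      · exact ⟨by omega, by rwa [drop_zero]⟩
      · exact ⟨by omega, by rw [hend]⟩
  rw [occCount_eq_card_filter, this, Finset.card_pair (by omega)]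

theorem closedWord_of_border {u z : List α} (hne : u ≠ []) (hlt : u.length < z.length)
    (hpre : u <+: z) (hsuf : u <:+ z) (hocc : occCount u z = 2) : ClosedWord z := by
  refine Or.inr ⟨u.length, Finset.mem_Ioo.mpr ⟨length_pos_iff.mpr hne, hlt⟩, ?_⟩
  rw [← prefix_iff_eq_take.mp hpre]
  exact ⟨hsuf, hocc⟩

theorem three_le_occCount_s19 {u u' z : List α} (hlt : u.length < u'.length)
    (hlt' : u'.length < z.length) (hpre : u <+: z) (hsuf : u <:+ z)
    (hpre' : u' <+: z) (hsuf' : u' <:+ z) : 3 ≤ occCount u z := by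
  have hmid : u <+: z.drop (u'.length - u.length) := by
    have hdrop : u'.drop (u'.length - u.length) = u :=
      (suffix_iff_eq_drop.mp (suffix_of_suffix_length_le hsuf hsuf' hlt.le)).symm
    simpa only [hdrop] using hpre'.drop (u'.length - u.length)
  have hend : u <+: z.drop (z.length - u.length) := by
    rw [← suffix_iff_eq_drop.mp hsuf]
  rw [occCount_eq_card_filter]
  refine le_trans ?_ (Finset.card_le_card (s := {0, u'.length - u.length, z.length - u.length}) ?_)
  · rw [Finset.card_insert_of_notMem (by simp; omega), Finset.card_pair (by omega)]
  · intro i hi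
    simp only [Finset.mem_insert, Finset.mem_singleton] at hi
    rcases hi with rfl | rfl | rfl <;> simp only [Finset.mem_filter, Finset.mem_range]
    · exact ⟨by omega, by rwa [drop_zero]⟩
    · exact ⟨by omega, hmid⟩
    · exact ⟨by omega, hend⟩

theorem eq_of_borders_occCount_eq_two {u u' z : List α}
    (hlt : u.length < z.length) (hlt' : u'.length < z.length)
    (hpre : u <+: z) (hsuf : u <:+ z) (hocc : occCount u z = 2)
    (hpre' : u' <+: z) (hsuf' : u' <:+ z) (hocc' : occCount u' z = 2) : u = u' := by
  have hlen : u.length = u'.length := by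
    rcases lt_trichotomy u.length u'.length with h | h | h
    · have := three_le_occCount_s19 h hlt' hpre hsuf hpre' hsuf'
      omega
    · exact h
    · have := three_le_occCount_s19 h hlt hpre' hsuf' hpre hsuf
      omega
  rw [prefix_iff_eq_take.mp hpre, prefix_iff_eq_take.mp hpre', hlen]

theorem closedWord_of_hasPeriod {u : List α} {P : ℕ} (h : u.HasPeriod P) (hP0 : 0 < P)
    (hP : 2 * P < u.length) : ClosedWord u := by
  classical
  have hex : ∃ q, 0 < q ∧ u.HasPeriod q := ⟨P, hP0, h⟩
  obtain ⟨q, ⟨hq0, hq⟩, hqP, hmin⟩ : ∃ q, (0 < q ∧ u.HasPeriod q) ∧ q ≤ P ∧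
      ∀ i < q, ¬ (0 < i ∧ u.HasPeriod i) :=
    ⟨Nat.find hex, Nat.find_spec hex, Nat.find_min' hex ⟨hP0, h⟩, fun _ => Nat.find_min hex⟩
  have hlt : (u.drop q).length < u.length := by rw [length_drop]; omega
  have hne : u.drop q ≠ [] := by rw [← length_pos_iff, length_drop]; omega
  have hocc : occCount (u.drop q) u = 2 :=
    occCount_eq_two_of_border (hq.drop_prefix q) (drop_suffix _ _) hlt fun i hi0 hi hpre => by
      rw [length_drop] at hi
      exact hmin i (by omega)
        ⟨hi0, hq.of_drop_prefix_drop (by omega) (by omega) hpre⟩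
  exact closedWord_of_border hne hlt (hq.drop_prefix q) (drop_suffix _ _) hocc

theorem exists_closedFactor_of_prefix_drop {w u : List α} (hu : u ≠ []) {a b : ℕ}
    (hab : a < b) (ha : u <+: w.drop a) (hb : u <+: w.drop b) :
    ∃ z ∈ closedFactors w, u <+: z ∧ u <:+ z ∧ occCount u z = 2 ∧
      u.length < z.length ∧ z.length ≤ b - a + u.length := by
  have hex : ∃ c, a < c ∧ u <+: w.drop c := ⟨b, hab, hb⟩
  obtain ⟨c, ⟨hac, hc⟩, hcb, hmin⟩ : ∃ c, (a < c ∧ u <+: w.drop c) ∧ c ≤ b ∧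
      ∀ d < c, ¬ (a < d ∧ u <+: w.drop d) :=
    ⟨Nat.find hex, Nat.find_spec hex, Nat.find_min' hex ⟨hab, hb⟩, fun _ => Nat.find_min hex⟩
  have hcw : c + u.length ≤ w.length := by
    have := hc.length_le
    have := length_pos_iff.mpr hu
    simp only [length_drop] at *
    omega
  -- `z` runs from the occurrence of `u` at `a` to the end of the next one, at `c`
  set z := (w.drop a).take (c - a + u.length) with hz
  have hzlen : z.length = c - a + u.length := by simp only [z, length_take, length_drop]; omega
  have hpre : u <+: z := prefix_take_iff.mpr ⟨ha, by omega⟩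
  have hzdrop : ∀ i, z.drop i <+: w.drop (a + i) := fun i => by
    rw [hz, drop_take, drop_drop]; exact take_prefix _ _
  have hsuf : u <:+ z := by
    have : z.drop (c - a) = u := by
      rw [hz, drop_take, drop_drop, show a + (c - a) = c by omega, Nat.add_sub_cancel_left,
        ← prefix_iff_eq_take.mp hc]
    exact this ▸ drop_suffix _ _
  have hlt : u.length < z.length := by omega
  have hocc : occCount u z = 2 :=
    occCount_eq_two_of_border hpre hsuf hlt fun i hi0 hi hpre' =>
      hmin (a + i) (by omega) ⟨by omega, hpre'.trans (hzdrop i)⟩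
  exact ⟨z, take_drop_mem_closedFactors (closedWord_of_border hu hlt hpre hsuf hocc),
    hpre, hsuf, hocc, hlt, by omega⟩

theorem sum_le_card_long_closedFactors_cube {v : List α} {L : ℕ} (hv : DistinctFactors v L) :
    ∑ i ∈ Finset.range (v.length + 1 - L), (v.length - i) ≤
      ((closedFactors (v ++ v ++ v)).filter fun z => 2 * v.length < z.length).card := by
  set p := v.length
  set w := v ++ v ++ v
  have hw : w.length = 3 * p := by simp only [w, length_append]; omega
  let S := (Finset.range (p + 1 - L)).sigma fun i => Finset.Icc (2 * p + 1) (3 * p - i)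
  have hS : ∀ x ∈ S, x.1 + L ≤ p ∧ 2 * p < x.2 ∧ x.1 + x.2 ≤ w.length := fun x hx => by
    simp only [S, Finset.mem_sigma, Finset.mem_range, Finset.mem_Icc] at hx
    omega
  have hlen : ∀ x ∈ S, ((w.drop x.1).take x.2).length = x.2 := fun x hx => by
    have := hS x hx
    simp only [length_take, length_drop]
    omega
  calc ∑ i ∈ Finset.range (p + 1 - L), (p - i) = S.card := by
        rw [Finset.card_sigma]
        refine Finset.sum_congr rfl fun i _ => ?_
        rw [Nat.card_Icc]
        omega
    _ ≤ _ := by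
      refine Finset.card_le_card_of_injOn (fun x => (w.drop x.1).take x.2) (fun x hx => ?_)
        (fun x hx y hy hxy => ?_)
      · have := hS x hx
        have hper := (hasPeriod_cube v).take_drop x.1 x.2
        refine Finset.mem_filter.mpr ⟨take_drop_mem_closedFactors ?_, by rw [hlen x hx]; omega⟩
        exact closedWord_of_hasPeriod hper (by omega) (by rw [hlen x hx]; omega)
      · have hm : x.2 = y.2 := by
          rw [← hlen x hx, ← hlen y hy]
          exact congrArg List.length hxy
        have hxy' : (w.drop x.1).take x.2 = (w.drop y.1).take x.2 := hxy.trans (by rw [hm])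
        obtain ⟨hx1, hx2, -⟩ := hS x hx
        obtain ⟨hy1, -⟩ := hS y hy
        have hi := hv.eq_of_take_drop_eq (by simp [w, append_assoc]) hx1 hy1 (by omega) hxy'
        exact Sigma.ext hi (heq_of_eq hm)

theorem exists_closedFactor_cube {v : List α} {i m : ℕ} (hm : 0 < m)
    (him : i + m ≤ 2 * v.length) :
    ∃ z ∈ closedFactors (v ++ v ++ v), ((v ++ v ++ v).drop i).take m <+: z ∧
      ((v ++ v ++ v).drop i).take m <:+ z ∧ occCount (((v ++ v ++ v).drop i).take m) z = 2 ∧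
      m < z.length ∧ z.length ≤ v.length + m := by
  set w := v ++ v ++ v
  have hw : w.length = 3 * v.length := by simp only [w, length_append]; omega
  have hnext : (w.drop i).take m <+: w.drop (i + v.length) := by
    refine prefix_of_prefix_length_le (take_prefix _ _) ?_ ?_
    · rw [add_comm, ← drop_drop]
      exact ((hasPeriod_cube v).drop_prefix v.length).drop i
    · simp only [length_take, length_drop]; omega
  have hlen : ((w.drop i).take m).length = m := by simp only [length_take, length_drop]; omega
  obtain ⟨z, hz, hpre, hsuf, hocc, hlt, hle⟩ := exists_closedFactor_of_prefix_drop
    (by rw [← length_pos_iff, hlen]; omega) (by omega) (take_prefix _ _) hnext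
  rw [hlen] at hlt hle
  exact ⟨z, hz, hpre, hsuf, hocc, hlt, by omega⟩

theorem sq_le_card_short_closedFactors_cube {v : List α} {L : ℕ} (hv : DistinctFactors v L)
    (hL : 0 < L) :
    (v.length + 1 - L) ^ 2 ≤
      ((closedFactors (v ++ v ++ v)).filter fun z => ¬ 2 * v.length < z.length).card := by
  set p := v.length
  set w := v ++ v ++ v
  have hw : w.length = 3 * p := by simp only [w, length_append]; omega
  let S := Finset.range (p + 1 - L) ×ˢ Finset.Icc L p
  have hS : ∀ x ∈ S, x.1 + L ≤ p ∧ L ≤ x.2 ∧ x.2 ≤ p := fun x hx => by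
    simp only [S, Finset.mem_product, Finset.mem_range, Finset.mem_Icc] at hx
    omega
  have hlen : ∀ x ∈ S, ((w.drop x.1).take x.2).length = x.2 := fun x hx => by
    have := hS x hx
    simp only [length_take, length_drop]
    omega
  have hclosed : ∀ x ∈ S, ∃ z ∈ closedFactors w, (w.drop x.1).take x.2 <+: z ∧
      (w.drop x.1).take x.2 <:+ z ∧ occCount ((w.drop x.1).take x.2) z = 2 ∧
      x.2 < z.length ∧ z.length ≤ p + x.2 := fun x hx => by
    have := hS x hx
    exact exists_closedFactor_cube (v := v) (i := x.1) (m := x.2) (by omega) (by omega)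
  choose! f hf using hclosed
  calc (p + 1 - L) ^ 2 = S.card := by
        rw [Finset.card_product, Finset.card_range, Nat.card_Icc, sq]
    _ ≤ _ := by
      refine Finset.card_le_card_of_injOn f (fun x hx => ?_) (fun x hx y hy hxy => ?_)
      · obtain ⟨hz, -, -, -, -, hle⟩ := hf x hx
        exact Finset.mem_filter.mpr ⟨hz, by have := hS x hx; omega⟩
      · obtain ⟨-, hpre, hsuf, hocc, hlt, -⟩ := hf x hx
        obtain ⟨-, hpre', hsuf', hocc', hlt', -⟩ := hf y hy
        rw [hxy] at hpre hsuf hocc hlt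
        have hu := eq_of_borders_occCount_eq_two (by rwa [hlen x hx]) (by rwa [hlen y hy])
          hpre hsuf hocc hpre' hsuf' hocc'
        have hm : x.2 = y.2 := by rw [← hlen x hx, ← hlen y hy, hu]
        have hxy' : (w.drop x.1).take x.2 = (w.drop y.1).take x.2 := hu.trans (by rw [hm])
        obtain ⟨hx1, hx2, -⟩ := hS x hx
        obtain ⟨hy1, -⟩ := hS y hy
        have hi := hv.eq_of_take_drop_eq (by simp [w, append_assoc]) hx1 hy1 hx2 hxy'
        exact Prod.ext hi hm

end Closed

theorem two_mul_sum_range_sub_add_mul_self (p t : ℕ) (ht : t ≤ p + 1) :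
    2 * ∑ i ∈ Finset.range t, (p - i) + t * t = t * (2 * p + 1) := by
  induction t with
  | zero => simp
  | succ t ih =>
    have := ih (by omega)
    rw [Finset.sum_range_succ]
    generalize ∑ i ∈ Finset.range t, (p - i) = s at *
    obtain ⟨d, rfl⟩ : ∃ d, p = t + d := ⟨p - t, by omega⟩
    rw [Nat.add_sub_cancel_left]
    nlinarith

theorem stmt19_general {α : Type*} [DecidableEq α] (n : ℕ) (v : List α)
    (h3 : 3 * v.length = n) (L : ℕ)
    (hdB : ∀ i j : ℕ, i + L ≤ v.length → j + L ≤ v.length →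
      (v.drop i).take L = (v.drop j).take L → i = j) :
    n ^ 2 + n ≤ 6 * clCount (v ++ v ++ v) + 4 * n * L := by
  subst h3
  rcases eq_or_ne v [] with rfl | hv
  · simp
  rcases lt_or_ge v.length L with hLp | hLp
  · nlinarith
  have hL0 : 0 < L := by
    by_contra h0
    have := length_pos_iff.mpr hv
    have := hdB 0 1 (by omega) (by omega) (by simp [show L = 0 by omega])
    omega
  have hlong := sum_le_card_long_closedFactors_cube hdB
  have hshort := sq_le_card_short_closedFactors_cube hdB hL0
  have hsum := two_mul_sum_range_sub_add_mul_self v.length (v.length + 1 - L) (by omega)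
  have hsplit := Finset.card_filter_add_card_filter_not (s := closedFactors (v ++ v ++ v))
    fun z => 2 * v.length < z.length
  generalize ht : v.length + 1 - L = t at hlong hshort hsum
  have hLt : L + t = v.length + 1 := by omega
  unfold clCount
  nlinarith [two_mul_le_add_sq v.length t]

/-- if v has length n/3 (3 | n) and all factors of v of length
L = ⌈log_{|A|}(n/3)⌉ are distinct, then the cube v³ contains at least
n²/6 - (2n/3)·L + n/6 distinct closed factors. -/
theorem stmt19 {α : Type*} [Fintype α] [DecidableEq α] (n : ℕ) (v : List α)
    (h3 : 3 * v.length = n) (L : ℕ) (hL : L = Nat.clog (Fintype.card α) (n / 3))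
    (hdB : ∀ i j : ℕ, i + L ≤ v.length → j + L ≤ v.length →
      (v.drop i).take L = (v.drop j).take L → i = j) :
    n ^ 2 + n ≤ 6 * clCount (v ++ v ++ v) + 4 * n * L :=
  stmt19_general n v h3 L hdB
end
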